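/- Let (G₁,P₁,θ₁) and (G₂,P₂,θ₂) be algebraic dynamical systems, let (φ_G,φ_P) be a morphism between them, let S_i = G_i ⋊_{θ_i} P_i, and let φ = φ_G ⋊ φ_P : S₁ → S₂ be the induced monoid homomorphism (g,p) ↦ (φ_G(g),φ_P(p)). Then φ satisfies φ(a)S₂ ∩ φ(b)S₂ = φ(aS₁ ∩ bS₁)S₂ for all a,b ∈ S₁ if and only if the morphism (φ_G,φ_P) is admissible. -/

import Mathlib

open Pointwise

/-- The principal right ideal `pS` of a monoid `S`. -/
def rIdeal {S : Type*} [Monoid S] (p : S) : Set S :=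
  Set.range fun s => p * s

/-- An algebraic dynamical system: a group `G`, a right LCM monoid `P`, and an action `θ` of
`P` by injective group endomorphisms of `G` which respects the order on `P`. -/
structure AlgDynSys (G P : Type*) [Group G] [Monoid P] where
  θ : P → G → G
  θ_hom : ∀ p a b, θ p (a * b) = θ p a * θ p b
  θ_one : ∀ a, θ 1 a = a
  θ_mul : ∀ p q a, θ (p * q) a = θ p (θ q a)
  θ_inj : ∀ p, Function.Injective (θ p)
  left_cancel : ∀ a b c : P, a * b = a * c → b = c
  lcm : ∀ p q : P, rIdeal p ∩ rIdeal q = ∅ ∨ ∃ r, rIdeal p ∩ rIdeal q = rIdeal r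
  respects : ∀ p q r : P, rIdeal p ∩ rIdeal q = rIdeal r →
    Set.range (θ p) ∩ Set.range (θ q) = Set.range (θ r)

namespace AlgDynSys

variable {G P : Type*} [Group G] [Monoid P]

/-- The multiplication of the semidirect product `G ⋊_θ P` on `G × P`. -/
def sdMul (A : AlgDynSys G P) (x y : G × P) : G × P :=
  (x.1 * A.θ x.2 y.1, x.2 * y.2)

/-- The principal right ideal `x · (G ⋊_θ P)` of the semidirect product. -/
def sdIdeal (A : AlgDynSys G P) (x : G × P) : Set (G × P) :=
  Set.range (A.sdMul x)

end AlgDynSys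

/-- A morphism of algebraic dynamical systems: a group homomorphism `φG` and an
identity-preserving monoid homomorphism `φP`, intertwining the actions. -/
structure ADSHom {G₁ P₁ G₂ P₂ : Type*} [Group G₁] [Monoid P₁] [Group G₂] [Monoid P₂]
    (A₁ : AlgDynSys G₁ P₁) (A₂ : AlgDynSys G₂ P₂) where
  φG : G₁ →* G₂
  φP : P₁ →* P₂
  equivariant : ∀ p g, φG (A₁.θ p g) = A₂.θ (φP p) (φG g)

/-- For `X ⊆ P₁`, the right ideal `φ(X)P₂ = {φ(x)·s : x ∈ X, s ∈ P₂}` of `P₂`. -/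
def imgIdeal {P₁ P₂ : Type*} [Monoid P₁] [Monoid P₂] (φ : P₁ → P₂) (X : Set P₁) : Set P₂ :=
  {y | ∃ x ∈ X, ∃ s : P₂, y = φ x * s}

/-- Admissibility of a morphism of algebraic dynamical systems: conditions (iv) and (v). -/
def ADSHom.Admissible {G₁ P₁ G₂ P₂ : Type*} [Group G₁] [Monoid P₁] [Group G₂] [Monoid P₂]
    {A₁ : AlgDynSys G₁ P₁} {A₂ : AlgDynSys G₂ P₂} (f : ADSHom A₁ A₂) : Prop :=
  (∀ p q : P₁, rIdeal (f.φP p) ∩ rIdeal (f.φP q) = imgIdeal f.φP (rIdeal p ∩ rIdeal q)) ∧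
  (∀ p q : P₁, (rIdeal p ∩ rIdeal q).Nonempty →
    f.φG ⁻¹' (Set.range f.φG ∩ (Set.range (A₂.θ (f.φP p)) * Set.range (A₂.θ (f.φP q)))) =
      Set.range (A₁.θ p) * Set.range (A₁.θ q))

/-!
In `S = G ⋊_θ P` the ideal `(g, p)S` is `gθ_p(G) × pP`, so `(g, p)S ∩ (h, q)S` splits into a
`G`-part and a `P`-part. It is non-empty exactly when `pP ∩ qP ≠ ∅` and `g⁻¹h ∈ θ_p(G)θ_q(G)`,
and then, since `θ` respects the order, it is the principal ideal `(c, r)S` where `pP ∩ qP = rP`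
and `(c, r)` is any of its elements with second coordinate `r`. Condition (iv) is the `P`-part
of the functoriality of `φ`, and condition (v) its `G`-part, read off from the non-emptiness
criterion. Conversely, under (iv) and (v) the image of a generator `(c, r)` of `aS₁ ∩ bS₁`
generates `φ(a)S₂ ∩ φ(b)S₂`.
-/

lemma Subgroup.exists_inv_mul_mem_and_inv_mul_mem_iff {G : Type*} [Group G] {H K : Subgroup G}
    {g h : G} : (∃ k, g⁻¹ * k ∈ H ∧ h⁻¹ * k ∈ K) ↔ g⁻¹ * h ∈ (H : Set G) * K := by
  constructor
  · rintro ⟨k, hkH, hkK⟩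
    refine ⟨_, hkH, _, K.inv_mem hkK, ?_⟩
    group
  · rintro ⟨a, ha, b, hb, hab⟩
    obtain rfl : h = g * (a * b) := by rw [show a * b = g⁻¹ * h from hab]; group
    refine ⟨g * a, by simpa using ha, ?_⟩
    have hb' : (g * (a * b))⁻¹ * (g * a) = b⁻¹ := by group
    exact hb' ▸ K.inv_mem hb

section imgIdeal

variable {P₁ P₂ : Type*} [Monoid P₁] [Monoid P₂] (φ : P₁ →* P₂)

lemma imgIdeal_rIdeal (r : P₁) : imgIdeal φ (rIdeal r) = rIdeal (φ r) := by
  ext y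
  constructor
  · rintro ⟨_, ⟨t, rfl⟩, s, rfl⟩
    exact ⟨φ t * s, by rw [map_mul, mul_assoc]⟩
  · rintro ⟨s, rfl⟩
    exact ⟨r, ⟨1, mul_one r⟩, s, rfl⟩

lemma imgIdeal_inter_subset (p q : P₁) :
    imgIdeal φ (rIdeal p ∩ rIdeal q) ⊆ rIdeal (φ p) ∩ rIdeal (φ q) := by
  rintro _ ⟨x, ⟨hxp, hxq⟩, s, rfl⟩
  have hφ {p : P₁} (hx : x ∈ rIdeal p) : φ x * s ∈ rIdeal (φ p) := by
    rw [← imgIdeal_rIdeal]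
    exact ⟨x, hx, s, rfl⟩
  exact ⟨hφ hxp, hφ hxq⟩

end imgIdeal

namespace AlgDynSys

variable {G P : Type*} [Group G] [Monoid P] (A : AlgDynSys G P)

def θHom (p : P) : G →* G :=
  MonoidHom.mk' (A.θ p) (A.θ_hom p)

lemma coe_range_θHom (p : P) : ((A.θHom p).range : Set G) = Set.range (A.θ p) :=
  MonoidHom.coe_range _

lemma sdMul_assoc (x y z : G × P) : A.sdMul (A.sdMul x y) z = A.sdMul x (A.sdMul y z) := by
  simp only [sdMul, A.θ_mul, A.θ_hom, mul_assoc]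

lemma sdIdeal_subset_of_mem {x y : G × P} (hy : y ∈ A.sdIdeal x) : A.sdIdeal y ⊆ A.sdIdeal x := by
  rintro _ ⟨u, rfl⟩
  obtain ⟨v, rfl⟩ := hy
  exact ⟨A.sdMul v u, (A.sdMul_assoc x v u).symm⟩

lemma mem_sdIdeal {g k : G} {p s : P} :
    (k, s) ∈ A.sdIdeal (g, p) ↔ g⁻¹ * k ∈ Set.range (A.θ p) ∧ s ∈ rIdeal p := by
  simp only [sdIdeal, sdMul, Set.mem_range, Prod.exists, Prod.mk.injEq, eq_inv_mul_iff_mul_eq]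
  exact ⟨fun ⟨u, t, hu, ht⟩ => ⟨⟨u, hu⟩, ⟨t, ht⟩⟩, fun ⟨⟨u, hu⟩, ⟨t, ht⟩⟩ => ⟨u, t, hu, ht⟩⟩

lemma mem_sdIdeal_inter {g h k : G} {p q s : P} :
    (k, s) ∈ A.sdIdeal (g, p) ∩ A.sdIdeal (h, q) ↔
      (g⁻¹ * k ∈ Set.range (A.θ p) ∧ h⁻¹ * k ∈ Set.range (A.θ q)) ∧
        s ∈ rIdeal p ∩ rIdeal q := by
  simp only [Set.mem_inter_iff, mem_sdIdeal]
  tauto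

lemma sdIdeal_inter_nonempty_iff {g h : G} {p q : P} :
    (A.sdIdeal (g, p) ∩ A.sdIdeal (h, q)).Nonempty ↔
      (rIdeal p ∩ rIdeal q).Nonempty ∧ g⁻¹ * h ∈ Set.range (A.θ p) * Set.range (A.θ q) := by
  simp only [Set.Nonempty, Prod.exists, mem_sdIdeal_inter, ← A.coe_range_θHom, SetLike.mem_coe,
    ← Subgroup.exists_inv_mul_mem_and_inv_mul_mem_iff]
  tauto

lemma inv_mul_mem_range_θ {g c k : G} {p : P} (hc : g⁻¹ * c ∈ Set.range (A.θ p))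
    (hk : g⁻¹ * k ∈ Set.range (A.θ p)) : c⁻¹ * k ∈ Set.range (A.θ p) := by
  rw [← A.coe_range_θHom] at *
  simpa [mul_assoc] using mul_mem (inv_mem hc) hk

lemma sdIdeal_inter_sdIdeal_eq {g h c : G} {p q r : P} (hr : rIdeal p ∩ rIdeal q = rIdeal r)
    (hc : (c, r) ∈ A.sdIdeal (g, p) ∩ A.sdIdeal (h, q)) :
    A.sdIdeal (g, p) ∩ A.sdIdeal (h, q) = A.sdIdeal (c, r) := by
  refine subset_antisymm ?_
    (Set.subset_inter (A.sdIdeal_subset_of_mem hc.1) (A.sdIdeal_subset_of_mem hc.2))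
  rintro ⟨k, s⟩ hk
  rw [mem_sdIdeal_inter] at hc hk
  rw [mem_sdIdeal, ← hr, ← A.respects p q r hr]
  exact ⟨⟨A.inv_mul_mem_range_θ hc.1.1 hk.1.1, A.inv_mul_mem_range_θ hc.1.2 hk.1.2⟩, hk.2⟩

end AlgDynSys

namespace ADSHom

variable {G₁ P₁ G₂ P₂ : Type*} [Group G₁] [Monoid P₁] [Group G₂] [Monoid P₂]
  {A₁ : AlgDynSys G₁ P₁} {A₂ : AlgDynSys G₂ P₂} (f : ADSHom A₁ A₂)

/-- The set `φ(X)S₂` for the induced map `φ = φ_G ⋊ φ_P : S₁ → S₂`. -/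
def sdImgIdeal (X : Set (G₁ × P₁)) : Set (G₂ × P₂) :=
  {y | ∃ x ∈ X, ∃ s : G₂ × P₂, y = A₂.sdMul (f.φG x.1, f.φP x.2) s}

def PreservesSdIdealInter : Prop :=
  ∀ a b : G₁ × P₁, A₂.sdIdeal (f.φG a.1, f.φP a.2) ∩ A₂.sdIdeal (f.φG b.1, f.φP b.2) =
    f.sdImgIdeal (A₁.sdIdeal a ∩ A₁.sdIdeal b)

lemma map_sdMul (x y : G₁ × P₁) :
    (f.φG (A₁.sdMul x y).1, f.φP (A₁.sdMul x y).2) =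
      A₂.sdMul (f.φG x.1, f.φP x.2) (f.φG y.1, f.φP y.2) := by
  simp only [AlgDynSys.sdMul, map_mul, f.equivariant]

lemma map_mem_sdIdeal {a x : G₁ × P₁} (hx : x ∈ A₁.sdIdeal a) :
    (f.φG x.1, f.φP x.2) ∈ A₂.sdIdeal (f.φG a.1, f.φP a.2) := by
  obtain ⟨u, rfl⟩ := hx
  exact ⟨_, (f.map_sdMul a u).symm⟩

lemma sdImgIdeal_inter_subset (a b : G₁ × P₁) :
    f.sdImgIdeal (A₁.sdIdeal a ∩ A₁.sdIdeal b) ⊆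
      A₂.sdIdeal (f.φG a.1, f.φP a.2) ∩ A₂.sdIdeal (f.φG b.1, f.φP b.2) := by
  rintro _ ⟨x, ⟨hxa, hxb⟩, s, rfl⟩
  exact ⟨A₂.sdIdeal_subset_of_mem (f.map_mem_sdIdeal hxa) ⟨s, rfl⟩,
    A₂.sdIdeal_subset_of_mem (f.map_mem_sdIdeal hxb) ⟨s, rfl⟩⟩

lemma range_mul_range_subset_preimage (p q : P₁) :
    Set.range (A₁.θ p) * Set.range (A₁.θ q) ⊆
      f.φG ⁻¹' (Set.range f.φG ∩ (Set.range (A₂.θ (f.φP p)) * Set.range (A₂.θ (f.φP q)))) := by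
  rintro _ ⟨_, ⟨x, rfl⟩, _, ⟨y, rfl⟩, rfl⟩
  refine ⟨⟨_, rfl⟩, _, ⟨f.φG x, rfl⟩, _, ⟨f.φG y, rfl⟩, ?_⟩
  rw [map_mul, f.equivariant, f.equivariant]

lemma rIdeal_inter_eq_imgIdeal (hf : f.PreservesSdIdealInter) (p q : P₁) :
    rIdeal (f.φP p) ∩ rIdeal (f.φP q) = imgIdeal f.φP (rIdeal p ∩ rIdeal q) := by
  refine subset_antisymm ?_ (imgIdeal_inter_subset f.φP p q)
  intro s hs
  have hone : ((1 : G₂), s) ∈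
      A₂.sdIdeal (f.φG (1 : G₁), f.φP p) ∩ A₂.sdIdeal (f.φG (1 : G₁), f.φP q) := by
    rw [A₂.mem_sdIdeal_inter, map_one, inv_one, one_mul, ← A₂.coe_range_θHom,
      ← A₂.coe_range_θHom]
    exact ⟨⟨one_mem _, one_mem _⟩, hs⟩
  rw [hf (1, p) (1, q)] at hone
  obtain ⟨⟨k, r⟩, hr, t, hst⟩ := hone
  exact ⟨r, ((A₁.mem_sdIdeal_inter).1 hr).2, t.2, congrArg Prod.snd hst⟩

lemma preimage_eq_range_mul_range (hf : f.PreservesSdIdealInter) (p q : P₁)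
    (hpq : (rIdeal p ∩ rIdeal q).Nonempty) :
    f.φG ⁻¹' (Set.range f.φG ∩ (Set.range (A₂.θ (f.φP p)) * Set.range (A₂.θ (f.φP q)))) =
      Set.range (A₁.θ p) * Set.range (A₁.θ q) := by
  refine subset_antisymm ?_ (f.range_mul_range_subset_preimage p q)
  rintro g ⟨-, hg⟩
  have himg : (rIdeal (f.φP p) ∩ rIdeal (f.φP q)).Nonempty := by
    obtain ⟨r, hr⟩ := hpq
    exact ⟨f.φP r, imgIdeal_inter_subset f.φP p q ⟨r, hr, 1, (mul_one _).symm⟩⟩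
  have h₂ : (A₂.sdIdeal (f.φG 1, f.φP p) ∩ A₂.sdIdeal (f.φG g, f.φP q)).Nonempty := by
    rw [A₂.sdIdeal_inter_nonempty_iff, map_one, inv_one, one_mul]
    exact ⟨himg, hg⟩
  rw [hf (1, p) (g, q)] at h₂
  obtain ⟨_, x, hx, -⟩ := h₂
  simpa using ((A₁.sdIdeal_inter_nonempty_iff).1 ⟨x, hx⟩).2

lemma preservesSdIdealInter_of_admissible (hf : f.Admissible) : f.PreservesSdIdealInter := by
  obtain ⟨hiv, hv⟩ := hf
  rintro ⟨g, p⟩ ⟨h, q⟩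
  refine subset_antisymm ?_ (f.sdImgIdeal_inter_subset _ _)
  intro y hy
  obtain ⟨hpq₂, hgh₂⟩ := (A₂.sdIdeal_inter_nonempty_iff).1 ⟨y, hy⟩
  have hpq : (rIdeal p ∩ rIdeal q).Nonempty := by
    obtain ⟨_, x, hx, -⟩ := hiv p q ▸ hpq₂
    exact ⟨x, hx⟩
  obtain ⟨r, hr⟩ := (A₁.lcm p q).resolve_left hpq.ne_empty
  have hgh : g⁻¹ * h ∈ Set.range (A₁.θ p) * Set.range (A₁.θ q) := by
    rw [← hv p q hpq]
    exact ⟨⟨_, rfl⟩, by simpa using hgh₂⟩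
  obtain ⟨⟨c, _⟩, hc⟩ := (A₁.sdIdeal_inter_nonempty_iff).2 ⟨hpq, hgh⟩
  have hcr : (c, r) ∈ A₁.sdIdeal (g, p) ∩ A₁.sdIdeal (h, q) := by
    rw [A₁.mem_sdIdeal_inter] at hc ⊢
    exact ⟨hc.1, hr ▸ ⟨1, mul_one r⟩⟩
  have hr₂ : rIdeal (f.φP p) ∩ rIdeal (f.φP q) = rIdeal (f.φP r) := by
    rw [hiv, hr, imgIdeal_rIdeal]
  rw [A₂.sdIdeal_inter_sdIdeal_eq hr₂ ⟨f.map_mem_sdIdeal hcr.1, f.map_mem_sdIdeal hcr.2⟩] at hy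
  obtain ⟨s, rfl⟩ := hy
  exact ⟨(c, r), hcr, s, rfl⟩

end ADSHom

/-- the induced homomorphism `φ = φ_G ⋊ φ_P : S₁ → S₂` between semidirect
products satisfies `φ(a)S₂ ∩ φ(b)S₂ = φ(aS₁ ∩ bS₁)S₂` for all `a, b ∈ S₁` iff the
morphism `(φ_G, φ_P)` is admissible. -/
theorem sdp_hom_funct_iff_admissible {G₁ P₁ G₂ P₂ : Type*}
    [Group G₁] [Monoid P₁] [Group G₂] [Monoid P₂]
    (A₁ : AlgDynSys G₁ P₁) (A₂ : AlgDynSys G₂ P₂) (f : ADSHom A₁ A₂) :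
    (∀ a b : G₁ × P₁,
        A₂.sdIdeal (f.φG a.1, f.φP a.2) ∩ A₂.sdIdeal (f.φG b.1, f.φP b.2) =
          {y | ∃ x ∈ A₁.sdIdeal a ∩ A₁.sdIdeal b,
            ∃ s : G₂ × P₂, y = A₂.sdMul (f.φG x.1, f.φP x.2) s}) ↔
      f.Admissible :=
  ⟨fun hf => ⟨f.rIdeal_inter_eq_imgIdeal hf, f.preimage_eq_range_mul_range hf⟩,
    f.preservesSdIdealInter_of_admissible⟩
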